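/- Let x_1, ..., x_m be complex numbers with |x_1| ≥ ... ≥ |x_m| and suppose |x_k| > |x_{k+1}| (strict gap after position k). Then (1/s)·log|e_k(x_1^s, ..., x_m^s)| → ∑_{j=1}^k log|x_j| as s → ∞, provided x_1⋯x_k ≠ 0. -/

import Mathlib

/-!
Since `∏ j ∈ S, x j ^ s = (∏ j ∈ S, x j) ^ s`, the sum is a power sum `∑ S, y S ^ s` over
the `k`-subsets `S`. Because `|x|` is antitone with a gap after position `k`, the initial
segment `T = {0, …, k-1}` is the unique `k`-subset of largest modulus `|y S|`: any other one
contains an index `≥ k`, and its remaining `k - 1` factors are dominated by the first `k - 1`.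
Dividing by the dominant term, `|∑ S, y S ^ s| / |y T| ^ s → 1`, so
`(1/s) log |∑ S, y S ^ s| → log |y T|`.
-/

open Filter Finset Topology

theorem tendsto_inv_mul_log_of_tendsto_div_pow {f : ℕ → ℝ} {P L : ℝ} (hP : P ≠ 0)
    (hL : L ≠ 0) (hf : Tendsto (fun n ↦ f n / P ^ n) atTop (𝓝 L)) :
    Tendsto (fun n : ℕ ↦ (n : ℝ)⁻¹ * Real.log (f n)) atTop (𝓝 (Real.log P)) := by
  have hlog : Tendsto (fun n : ℕ ↦ (n : ℝ)⁻¹ * Real.log (f n / P ^ n)) atTop (𝓝 0) := by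
    simpa using (tendsto_inv_atTop_zero.comp tendsto_natCast_atTop_atTop).mul
      ((Real.continuousAt_log hL).tendsto.comp hf)
  have hsplit : ∀ᶠ n : ℕ in atTop,
      Real.log P + (n : ℝ)⁻¹ * Real.log (f n / P ^ n) = (n : ℝ)⁻¹ * Real.log (f n) := by
    filter_upwards [hf.eventually_ne hL, eventually_ne_atTop 0] with n hn hn0
    rw [Real.log_div ((div_ne_zero_iff.1 hn).1) (pow_ne_zero n hP), Real.log_pow]
    field_simp
    ring
  simpa using (hlog.const_add (Real.log P)).congr' hsplit

section PowerSums

variable {𝕜 ι : Type*} [NormedField 𝕜] {s : Finset ι} {y : ι → 𝕜} {i₀ : ι}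

theorem tendsto_norm_sum_pow_div_pow_of_norm_lt (hi₀ : i₀ ∈ s) (hy : y i₀ ≠ 0)
    (hlt : ∀ i ∈ s, i ≠ i₀ → ‖y i‖ < ‖y i₀‖) :
    Tendsto (fun n : ℕ ↦ ‖∑ i ∈ s, y i ^ n‖ / ‖y i₀‖ ^ n) atTop (𝓝 1) := by
  classical
  have hratio : ∀ i ∈ s,
      Tendsto (fun n : ℕ ↦ (y i / y i₀) ^ n) atTop (𝓝 (if i = i₀ then 1 else 0)) := by
    intro i hi
    split_ifs with h
    · simp [h, div_self hy]
    · apply tendsto_pow_atTop_nhds_zero_of_norm_lt_one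
      rw [norm_div, div_lt_one (norm_pos_iff.2 hy)]
      exact hlt i hi h
  have hsum := (tendsto_finsetSum s hratio).norm
  rw [sum_ite_eq' s i₀, if_pos hi₀, norm_one] at hsum
  refine hsum.congr fun n ↦ ?_
  simp only [div_pow, ← sum_div, norm_div, norm_pow]

theorem tendsto_inv_mul_log_norm_sum_pow_of_norm_lt (hi₀ : i₀ ∈ s) (hy : y i₀ ≠ 0)
    (hlt : ∀ i ∈ s, i ≠ i₀ → ‖y i‖ < ‖y i₀‖) :
    Tendsto (fun n : ℕ ↦ (n : ℝ)⁻¹ * Real.log ‖∑ i ∈ s, y i ^ n‖) atTop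
      (𝓝 (Real.log ‖y i₀‖)) :=
  tendsto_inv_mul_log_of_tendsto_div_pow (norm_ne_zero_iff.2 hy) one_ne_zero
    (tendsto_norm_sum_pow_div_pow_of_norm_lt hi₀ hy hlt)

end PowerSums

namespace Fin

theorem val_le_val_apply_of_strictMono {r m : ℕ} {e : Fin r → Fin m} (he : StrictMono e)
    (i : Fin r) : (i : ℕ) ≤ e i := by
  simpa using card_le_card_of_injOn e (s := Iio i) (t := Iio (e i))
    (fun j hj ↦ by simpa using he (by simpa using hj)) he.injective.injOn

theorem filter_val_lt_eq_map_castLEEmb {m r : ℕ} (h : r ≤ m) :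
    univ.filter (fun j : Fin m ↦ (j : ℕ) < r) = univ.map (castLEEmb h) := by
  ext j
  simp only [mem_filter, mem_univ, true_and, Finset.mem_map, castLEEmb_apply]
  exact ⟨fun hj ↦ ⟨⟨j, hj⟩, rfl⟩, by rintro ⟨a, rfl⟩; exact a.2⟩

theorem prod_le_prod_filter_val_lt_of_antitone {R : Type*} [CommMonoidWithZero R] [PartialOrder R]
    [ZeroLEOneClass R] [PosMulMono R] {m r : ℕ} {f : Fin m → R} (hf0 : ∀ i, 0 ≤ f i)
    (hf : Antitone f) {A : Finset (Fin m)} (hA : #A = r) :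
    ∏ j ∈ A, f j ≤ ∏ j ∈ univ.filter (fun j : Fin m ↦ (j : ℕ) < r), f j := by
  have hr : r ≤ m := hA ▸ (card_le_univ A).trans_eq (Fintype.card_fin m)
  rw [← A.map_orderEmbOfFin_univ hA, filter_val_lt_eq_map_castLEEmb hr, prod_map, prod_map]
  exact prod_le_prod (fun i _ ↦ hf0 _) fun i _ ↦
    hf (val_le_val_apply_of_strictMono (A.orderEmbOfFin hA).strictMono i)

theorem prod_lt_prod_filter_val_lt_of_antitone {R : Type*} [CommSemiring R] [LinearOrder R]
    [IsStrictOrderedRing R] {m k : ℕ} (hk1 : 1 ≤ k) (hkm : k < m) {f : Fin m → R}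
    (hf0 : ∀ i, 0 ≤ f i) (hf : Antitone f)
    (hgap : f ⟨k, hkm⟩ < f ⟨k - 1, (k.sub_le 1).trans_lt hkm⟩)
    (hpos : 0 < ∏ j ∈ univ.filter (fun j : Fin m ↦ (j : ℕ) < k), f j)
    {S : Finset (Fin m)} (hS : #S = k) (hST : S ≠ univ.filter (fun j : Fin m ↦ (j : ℕ) < k)) :
    ∏ j ∈ S, f j < ∏ j ∈ univ.filter (fun j : Fin m ↦ (j : ℕ) < k), f j := by
  set T := univ.filter (fun j : Fin m ↦ (j : ℕ) < k)
  set T' := univ.filter (fun j : Fin m ↦ (j : ℕ) < k - 1)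
  have hprodT :
      ∏ j ∈ T, f j = f ⟨k - 1, (k.sub_le 1).trans_lt hkm⟩ * ∏ j ∈ T', f j := by
    have hT : T = insert ⟨k - 1, (k.sub_le 1).trans_lt hkm⟩ T' := by
      ext j
      simp only [T, T', mem_filter, mem_univ, true_and, mem_insert, Fin.ext_iff]
      omega
    rw [hT, prod_insert (by simp [T'])]
  have hQ : 0 < ∏ j ∈ T', f j := pos_of_mul_pos_right (hprodT ▸ hpos) (hf0 _)
  obtain ⟨j, hjS, hjT⟩ : ∃ j ∈ S, j ∉ T := not_subset.1 fun h ↦ hST <|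
    eq_of_subset_of_card_le h (by simp [T, card_filter_val_lt, hS, hkm.le])
  have hkj : (⟨k, hkm⟩ : Fin m) ≤ j := by simpa [T, Fin.le_def] using hjT
  calc ∏ i ∈ S, f i = f j * ∏ i ∈ S.erase j, f i := (mul_prod_erase S f hjS).symm
    _ ≤ f ⟨k, hkm⟩ * ∏ i ∈ T', f i :=
      mul_le_mul (hf hkj) (prod_le_prod_filter_val_lt_of_antitone hf0 hf
        (by rw [card_erase_of_mem hjS, hS])) (prod_nonneg fun i _ ↦ hf0 i) (hf0 _)
    _ < f ⟨k - 1, (k.sub_le 1).trans_lt hkm⟩ * ∏ i ∈ T', f i :=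
      mul_lt_mul_of_pos_right hgap hQ
    _ = ∏ i ∈ T, f i := hprodT.symm

end Fin

/-- If `|x 0| ≥ ... ≥ |x (m-1)|` with a strict gap `|x (k-1)| > |x k|` and
`x 0 ⋯ x (k-1) ≠ 0`, then
`(1/s)·log|e_k(x^s)| → ∑_{j<k} log|x j|` as `s → ∞`. -/
theorem stmt18 (m k : ℕ) (hk1 : 1 ≤ k) (hkm : k < m) (x : Fin m → ℂ)
    (hsort : ∀ i j : Fin m, i ≤ j → Norm.norm (x j) ≤ Norm.norm (x i))
    (hgap : Norm.norm (x ⟨k, hkm⟩) < Norm.norm (x ⟨k - 1, by omega⟩))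
    (hnz : (∏ j ∈ Finset.univ.filter fun j : Fin m => (j : ℕ) < k, x j) ≠ 0) :
    Tendsto (fun s : ℕ => (s : ℝ)⁻¹ * Real.log (Norm.norm
        (∑ S ∈ Finset.powersetCard k (Finset.univ : Finset (Fin m)),
          ∏ j ∈ S, x j ^ s)))
      atTop
      (nhds (∑ j ∈ Finset.univ.filter fun j : Fin m => (j : ℕ) < k,
        Real.log (Norm.norm (x j)))) := by
  set T := univ.filter fun j : Fin m ↦ (j : ℕ) < k
  have hT : T ∈ powersetCard k univ :=
    mem_powersetCard.2 ⟨subset_univ T, by simp [T, Fin.card_filter_val_lt, hkm.le]⟩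
  have hdom : ∀ S ∈ powersetCard k univ, S ≠ T → ‖∏ j ∈ S, x j‖ < ‖∏ j ∈ T, x j‖ := by
    intro S hS hST
    rw [norm_prod, norm_prod]
    exact Fin.prod_lt_prod_filter_val_lt_of_antitone hk1 hkm (fun i ↦ norm_nonneg _) hsort
      hgap (by simpa only [norm_prod] using norm_pos_iff.2 hnz) (mem_powersetCard.1 hS).2 hST
  have hlim := tendsto_inv_mul_log_norm_sum_pow_of_norm_lt hT hnz hdom
  simp only [← prod_pow] at hlim
  rwa [norm_prod, Real.log_prod fun j hj ↦ norm_ne_zero_iff.2 (prod_ne_zero_iff.1 hnz j hj)]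
    at hlim
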